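/- arXiv:2508.01160 — 2 statements merged into one kernel-verified Lean document; each statement's English description precedes it below -/
import Mathlib

section
/- Let V be a finite-dimensional ℚ(t)-vector space with a symmetric bilinear form (·,·), and let v_1,…,v_n be a basis of V such that (v_i, v_j) ∈ δ_{i,j} + t·A_0 for all i,j (where A_0 is the localization of ℚ[t] at (t)). Then for every nonzero v ∈ V one has (v,v) ≠ 0; in particular, the restriction of the form to any subspace of V is nondegenerate. -/
/-!
Clear denominators and the largest common power of `t` from the coordinates of `x ≠ 0`: this
rescales `x` to `y = ∑ qᵢ vᵢ` with polynomials `qᵢ`, not all vanishing at `t = 0`. Then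
`(y, y) = ∑ qᵢ² + t·a` with `a ∈ A₀`, and clearing the denominator of `a` and evaluating at `0`
leaves `∑ qᵢ(0)² > 0`, so `(y, y) ≠ 0`.
-/

open Polynomial

noncomputable def A0 : Subring (RatFunc ℚ) where
  carrier := {r | ∃ f g : ℚ[X], g.eval 0 ≠ 0 ∧
    r = algebraMap ℚ[X] (RatFunc ℚ) f / algebraMap ℚ[X] (RatFunc ℚ) g}
  zero_mem' := ⟨0, 1, by simp, by simp⟩
  one_mem' := ⟨1, 1, by simp, by simp⟩
  add_mem' := by
    rintro r s ⟨f1, g1, h1, rfl⟩ ⟨f2, g2, h2, rfl⟩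
    have hg1 : (algebraMap ℚ[X] (RatFunc ℚ)) g1 ≠ 0 :=
      RatFunc.algebraMap_ne_zero (fun h => h1 (by simp [h]))
    have hg2 : (algebraMap ℚ[X] (RatFunc ℚ)) g2 ≠ 0 :=
      RatFunc.algebraMap_ne_zero (fun h => h2 (by simp [h]))
    refine ⟨f1 * g2 + f2 * g1, g1 * g2, by simp [h1, h2], ?_⟩
    field_simp
    simp only [map_add, map_mul]
    ring
  neg_mem' := by
    rintro r ⟨f, g, h, rfl⟩
    exact ⟨-f, g, h, by rw [map_neg, neg_div]⟩
  mul_mem' := by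
    rintro r s ⟨f1, g1, h1, rfl⟩ ⟨f2, g2, h2, rfl⟩
    refine ⟨f1 * f2, g1 * g2, by simp [h1, h2], ?_⟩
    rw [map_mul, map_mul, div_mul_div_comm]

noncomputable def tElem : A0 :=
  ⟨algebraMap ℚ[X] (RatFunc ℚ) X, X, 1, by simp, by simp⟩

noncomputable def tIdeal : Ideal A0 := Ideal.span {tElem}

/-- The subset `t·A₀` of `ℚ(t)`. -/
noncomputable def tA0Set : Set (RatFunc ℚ) :=
  {x | ∃ y ∈ A0, x = algebraMap ℚ[X] (RatFunc ℚ) X * y}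

local notation "φ" => algebraMap ℚ[X] (RatFunc ℚ)

theorem LinearMap.apply_sum_smul_sum_smul {ι R M : Type*} [Fintype ι] [CommSemiring R]
    [AddCommMonoid M] [Module R M] (B : M →ₗ[R] M →ₗ[R] R) (c d : ι → R) (v : ι → M) :
    B (∑ i, c i • v i) (∑ j, d j • v j) = ∑ i, ∑ j, c i * d j * B (v i) (v j) := by
  simp only [map_sum, map_smul, LinearMap.sum_apply, LinearMap.smul_apply, smul_eq_mul,
    Finset.mul_sum]
  rw [Finset.sum_comm]
  exact Finset.sum_congr rfl fun i _ => Finset.sum_congr rfl fun j _ => by ring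

theorem Polynomial.exists_X_pow_mul_eval_zero_ne_zero {ι R : Type*} [CommRing R] [IsDomain R]
    (P : ι → R[X]) {i₀ : ι} (hi₀ : P i₀ ≠ 0) :
    ∃ (m : ℕ) (Q : ι → R[X]), (∀ i, P i = X ^ m * Q i) ∧ ∃ i, (Q i).eval 0 ≠ 0 := by
  induction hd : (P i₀).natDegree using Nat.strong_induction_on generalizing P with
  | _ d ih =>
  by_cases hP : ∃ i, (P i).eval 0 ≠ 0
  · exact ⟨0, P, by simp, hP⟩
  push Not at hP
  choose P' hP' using fun i => X_dvd_iff.mpr ((coeff_zero_eq_eval_zero (P i)).trans (hP i))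
  have hP'i₀ : P' i₀ ≠ 0 := fun h => hi₀ (by rw [hP' i₀, h, mul_zero])
  obtain ⟨m, Q, hQ, hQ0⟩ :=
    ih _ (by rw [← hd, hP' i₀, natDegree_X_mul hP'i₀]; omega) P' hP'i₀ rfl
  exact ⟨m + 1, Q, fun i => by rw [hP' i, hQ i, pow_succ', mul_assoc], hQ0⟩

theorem RatFunc.exists_eq_mul_algebraMap_eval_zero_ne_zero {ι K : Type*} [Finite ι] [Field K]
    (c : ι → RatFunc K) (hc : c ≠ 0) :
    ∃ s ≠ 0, ∃ q : ι → K[X], (∃ i, (q i).eval 0 ≠ 0) ∧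
      ∀ i, c i = s * algebraMap K[X] (RatFunc K) (q i) := by
  obtain ⟨b, hb⟩ := IsLocalization.exist_integer_multiples_of_finite (nonZeroDivisors K[X]) c
  choose P hP using hb
  have hb0 : algebraMap K[X] (RatFunc K) b ≠ 0 :=
    RatFunc.algebraMap_ne_zero (nonZeroDivisors.coe_ne_zero b)
  obtain ⟨i₀, hi₀⟩ := Function.ne_iff.mp hc
  have hPi₀ : P i₀ ≠ 0 := by
    intro h
    have hbc := hP i₀
    rw [h, map_zero, Algebra.smul_def] at hbc
    exact hi₀ ((mul_eq_zero.mp hbc.symm).resolve_left hb0)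
  obtain ⟨m, Q, hQ, hQ0⟩ := exists_X_pow_mul_eval_zero_ne_zero P hPi₀
  have hXm : algebraMap K[X] (RatFunc K) (Polynomial.X ^ m) ≠ 0 :=
    RatFunc.algebraMap_ne_zero (pow_ne_zero _ Polynomial.X_ne_zero)
  refine ⟨algebraMap K[X] (RatFunc K) (Polynomial.X ^ m) / algebraMap K[X] (RatFunc K) b,
    div_ne_zero hXm hb0, Q, hQ0, fun i => ?_⟩
  rw [div_mul_eq_mul_div, ← map_mul, ← hQ, eq_div_iff hb0, hP, Algebra.smul_def, mul_comm]

theorem algebraMap_mem_A0 (p : ℚ[X]) : φ p ∈ A0 :=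
  ⟨p, 1, by simp, by simp⟩

theorem algebraMap_add_X_mul_ne_zero {q : ℚ[X]} (hq : q.eval 0 ≠ 0) {a : RatFunc ℚ}
    (ha : a ∈ A0) : φ q + φ X * a ≠ 0 := by
  obtain ⟨f, g, hg, rfl⟩ := ha
  intro h
  have hg' : φ g ≠ 0 := RatFunc.algebraMap_ne_zero (fun h0 => hg (by simp [h0]))
  have hpoly : q * g + X * f = 0 := by
    apply RatFunc.algebraMap_injective ℚ
    rw [map_add, map_mul, map_mul, map_zero]
    field_simp at h
    linear_combination h
  have h0 := congrArg (eval 0) hpoly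
  simp only [eval_add, eval_mul, eval_X, zero_mul, add_zero, eval_zero, mul_eq_zero] at h0
  exact h0.elim hq hg

section GramMatrix

variable {ι V : Type*} [Fintype ι] [DecidableEq ι] [AddCommGroup V] [Module (RatFunc ℚ) V]
  {B : V →ₗ[RatFunc ℚ] V →ₗ[RatFunc ℚ] RatFunc ℚ} {v : ι → V}

theorem exists_apply_sum_smul_self_eq
    (hgram : ∀ i j, B (v i) (v j) - (if i = j then 1 else 0) ∈ tA0Set)
    (q : ι → ℚ[X]) :
    ∃ a ∈ A0, B (∑ i, φ (q i) • v i) (∑ i, φ (q i) • v i) = φ (∑ i, q i ^ 2) + φ X * a := by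
  choose a haA0 ha using hgram
  refine ⟨∑ i, ∑ j, φ (q i) * φ (q j) * a i j, Subring.sum_mem _ fun i _ =>
    Subring.sum_mem _ fun j _ => Subring.mul_mem _
      (Subring.mul_mem _ (algebraMap_mem_A0 _) (algebraMap_mem_A0 _)) (haA0 i j), ?_⟩
  have hB : ∀ i j, B (v i) (v j) = (if i = j then 1 else 0) + φ X * a i j := fun i j => by
    linear_combination ha i j
  rw [LinearMap.apply_sum_smul_sum_smul, map_sum, Finset.mul_sum, ← Finset.sum_add_distrib]
  refine Finset.sum_congr rfl fun i _ => ?_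
  simp only [hB, mul_add, Finset.sum_add_distrib, mul_ite, mul_one, mul_zero, Finset.sum_ite_eq,
    Finset.mem_univ, if_true, sq, map_mul, Finset.mul_sum]
  congr 1
  exact Finset.sum_congr rfl fun j _ => by ring

theorem apply_sum_smul_self_ne_zero
    (hgram : ∀ i j, B (v i) (v j) - (if i = j then 1 else 0) ∈ tA0Set)
    {q : ι → ℚ[X]} (hq : ∃ i, (q i).eval 0 ≠ 0) :
    B (∑ i, φ (q i) • v i) (∑ i, φ (q i) • v i) ≠ 0 := by
  obtain ⟨a, ha, hBa⟩ := exists_apply_sum_smul_self_eq hgram q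
  obtain ⟨i₀, hi₀⟩ := hq
  rw [hBa]
  refine algebraMap_add_X_mul_ne_zero (ne_of_gt ?_) ha
  rw [eval_finsetSum]
  exact Finset.sum_pos' (fun i _ => by rw [eval_pow]; positivity)
    ⟨i₀, Finset.mem_univ _, by rw [eval_pow]; positivity⟩

end GramMatrix

theorem stmt_4_general (n : ℕ) (V : Type*) [AddCommGroup V] [Module (RatFunc ℚ) V]
    (B : V →ₗ[RatFunc ℚ] V →ₗ[RatFunc ℚ] RatFunc ℚ)
    (v : Module.Basis (Fin n) (RatFunc ℚ) V)
    (hgram : ∀ i j, B (v i) (v j) - (if i = j then 1 else 0) ∈ tA0Set) :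
    (∀ x : V, x ≠ 0 → B x x ≠ 0) ∧
    ∀ W : Submodule (RatFunc ℚ) V, ∀ w ∈ W, (∀ w' ∈ W, B w w' = 0) → w = 0 := by
  have anisotropic : ∀ x : V, x ≠ 0 → B x x ≠ 0 := by
    intro x hx
    have hc : ⇑(v.repr x) ≠ 0 := fun h => hx (v.repr.map_eq_zero_iff.mp (DFunLike.coe_injective h))
    obtain ⟨s, hs, q, hq, hcq⟩ := RatFunc.exists_eq_mul_algebraMap_eval_zero_ne_zero _ hc
    have hx_eq : x = s • ∑ i, φ (q i) • v i := by
      conv_lhs => rw [← v.sum_repr x]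
      simp only [hcq, Finset.smul_sum, smul_smul]
    simp only [hx_eq, map_smul, LinearMap.smul_apply, smul_eq_mul]
    exact mul_ne_zero hs (mul_ne_zero hs (apply_sum_smul_self_ne_zero hgram hq))
  exact ⟨anisotropic, fun W w hw hB => not_imp_not.mp (anisotropic w) (hB w hw)⟩

/-- if a symmetric bilinear form on a finite-dimensional `ℚ(t)`-vector
space has a basis whose Gram matrix entries lie in `δ i j + t·A₀`, then `(v,v) ≠ 0`
for every nonzero `v`; in particular the form is nondegenerate on every subspace. -/
theorem stmt_4 (n : ℕ) (V : Type*) [AddCommGroup V] [Module (RatFunc ℚ) V]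
    (B : V →ₗ[RatFunc ℚ] V →ₗ[RatFunc ℚ] RatFunc ℚ)
    (hsymm : ∀ x y, B x y = B y x)
    (v : Module.Basis (Fin n) (RatFunc ℚ) V)
    (hgram : ∀ i j, B (v i) (v j) - (if i = j then 1 else 0) ∈ tA0Set) :
    (∀ x : V, x ≠ 0 → B x x ≠ 0) ∧
    ∀ W : Submodule (RatFunc ℚ) V, ∀ w ∈ W, (∀ w' ∈ W, B w w' = 0) → w = 0 :=
  stmt_4_general n V B v hgram
end

section
/- Let n ≥ 1, 1 ≤ s < r ≤ n+1, and for k ∈ {1,…,n} set i_k = k if k < r, i_k = k+1 if k ≥ r, and j_k = k if k < s, j_k = k+1 if k ≥ s. Then for every permutation σ ∈ S_n, the integer s − r + Σ_{k : j_{σ(k)} > i_k} (j_{σ(k)} − i_k) is nonnegative. -/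
/-!
Since `i` and `j` enumerate `{1, …, n + 1} \ {r}` and `{1, …, n + 1} \ {s}` and `σ` is a bijection,
the unrestricted sum `∑ₖ (j (σ k) - i k)` equals `∑ j - ∑ i = r - s`; the terms left out by the
filter are nonpositive, so the restricted sum is at least `r - s`.
-/

open Finset

theorem Finset.sum_le_sum_filter_of_nonpos {ι M : Type*} [AddCommMonoid M] [PartialOrder M]
    [IsOrderedAddMonoid M] (s : Finset ι) (p : ι → Prop) [DecidablePred p] (f : ι → M)
    (h : ∀ x ∈ s, ¬ p x → f x ≤ 0) : ∑ x ∈ s, f x ≤ ∑ x ∈ s with p x, f x := by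
  rw [← sum_filter_add_sum_filter_not s p f]
  refine add_le_of_nonpos_right (sum_nonpos fun x hx => ?_)
  rw [mem_filter] at hx
  exact h x hx.1 hx.2

/-- `k ↦ if k + 1 < t then k + 1 else k + 2` enumerates `{1, …, n + 1} \ {t}` on `range n`,
so its sum misses exactly `t`. -/
theorem sum_range_skip_add (n t : ℕ) (ht : 1 ≤ t) (htn : t ≤ n + 1) :
    ∑ k ∈ range n, (if k + 1 < t then k + 1 else k + 2) + t = ∑ k ∈ range (n + 1), (k + 1) := by
  induction n with
  | zero => simp; omega
  | succ n ih =>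
    rcases Nat.lt_or_eq_of_le htn with htn | rfl
    · rw [sum_range_succ, if_neg (by omega), add_right_comm, ih (by omega), ← sum_range_succ]
    · rw [sum_congr rfl fun k hk => if_pos (by simp at hk; omega), ← sum_range_succ]

/-- Lemma 2.2.6 of Giri–Pal: let `1 ≤ s < r ≤ n+1`, and for
`k ∈ {1,…,n}` (encoded as `k : Fin n` with value `(k : ℕ) + 1`) set
`i_k = k` if `k < r`, `i_k = k+1` if `k ≥ r`, and `j_k = k` if `k < s`,
`j_k = k+1` if `k ≥ s`.  Then for every permutation `σ ∈ S_n`,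
`s − r + Σ_{k : j_{σ(k)} > i_k} (j_{σ(k)} − i_k) ≥ 0`. -/
theorem stmt_13 (n : ℕ) (s r : ℕ) (hs : 1 ≤ s) (hsr : s < r) (hr : r ≤ n + 1)
    (i j : Fin n → ℕ)
    (hi : ∀ k : Fin n, i k = if (k : ℕ) + 1 < r then (k : ℕ) + 1 else (k : ℕ) + 2)
    (hj : ∀ k : Fin n, j k = if (k : ℕ) + 1 < s then (k : ℕ) + 1 else (k : ℕ) + 2)
    (σ : Equiv.Perm (Fin n)) :
    0 ≤ (s : ℤ) - (r : ℤ) +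
        ∑ k ∈ Finset.univ.filter (fun k : Fin n => i k < j (σ k)),
          ((j (σ k) : ℤ) - (i k : ℤ)) := by
  have hi_sum : ∑ k, i k + r = ∑ k ∈ range (n + 1), (k + 1) := by
    simp only [hi, Fin.sum_univ_eq_sum_range (fun k => if k + 1 < r then k + 1 else k + 2)]
    exact sum_range_skip_add n r (by omega) hr
  have hj_sum : ∑ k, j k + s = ∑ k ∈ range (n + 1), (k + 1) := by
    simp only [hj, Fin.sum_univ_eq_sum_range (fun k => if k + 1 < s then k + 1 else k + 2)]
    exact sum_range_skip_add n s hs (by omega)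
  have htotal : ∑ k, ((j (σ k) : ℤ) - i k) = r - s := by
    rw [sum_sub_distrib, Equiv.sum_comp σ (fun k => (j k : ℤ))]
    have := congrArg (Nat.cast : ℕ → ℤ) (hj_sum.trans hi_sum.symm)
    push_cast at this
    omega
  have hle := sum_le_sum_filter_of_nonpos univ (fun k => i k < j (σ k))
    (fun k => (j (σ k) : ℤ) - i k) fun k _ hk => by omega
  omega
end
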